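/- For every A ∈ 𝓜, lim_{C↓1} U*(C, A) = U(log(A)); moreover for every C > 1 one has the two-sided bound (log C/(C−1))·U(log(A)) ≤ U*(C, A) ≤ 1 − (log C/(C−1))·(1 − U(log(A))). -/

import Mathlib

/-!
Write `B = log A`, `L = log C` and `r = log C / (C - 1)`. The substitution `y = exp t` turns
`τ_A(C, j)` into an average of `1_B` over `[jL, (j+1)L]` against the weight `exp t`, which lies
between `C^j` and `C^(j+1)`; bounding the weight from below on `B` and on its complement gives
`r σ_B(L, jL) ≤ τ_A(C, j) ≤ 1 - r + r σ_B(L, jL)`. Averaging over `n` consecutive blocks turns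
this into the same bounds with `σ_B(nL, kL)`. Every window `[x, x + D]` sits inside a grid window
`[kL, (k+n)L]` of length less than `D + 2L`, so the suprema of `σ_B` over grid windows and over all
windows have the same limsup `U(log A)`. Finally `r → 1` as `C ↓ 1`.
-/

open MeasureTheory Filter Set Topology

noncomputable section

namespace UPN

/-- The half line `[0,∞)` viewed as a subset of `ℝ`. -/
def Ray : Set ℝ := Set.Ici 0

/-- The indicator function `1_A`. -/
def ind (A : Set ℝ) : ℝ → ℝ := Set.indicator A fun _ => (1 : ℝ)

/-- The collection `𝓜` of countable unions `⋃ᵢ [a_{2i-1}, a_{2i})` for a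
nondecreasing nonnegative sequence `a`. -/
def Mcal : Set (Set ℝ) :=
  {A | ∃ a : ℕ → ℝ, 0 ≤ a 0 ∧ Monotone a ∧
        A = ⋃ i : ℕ, Set.Ico (a (2 * i)) (a (2 * i + 1))}

/-- The density function `ρ_A`: `ρ_A(0) = 0` and `ρ_A(x) = (1/x)∫₀ˣ 1_A(y) dy`. -/
def rho (A : Set ℝ) (x : ℝ) : ℝ :=
  if x = 0 then 0 else (1 / x) * ∫ y in (0:ℝ)..x, ind A y

/-- The collection `𝓒` of elements of `𝓜` having natural density. -/
def Ccal : Set (Set ℝ) :=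
  {A | A ∈ Mcal ∧ ∃ l : ℝ, Tendsto (rho A) atTop (𝓝 l)}

/-- The natural density `λ(A) = lim_{x→∞} ρ_A(x)`. -/
def lam (A : Set ℝ) : ℝ := limUnder atTop (rho A)

/-- `S_A(x) = m(A ∩ [0,x))`. -/
def Sfn (A : Set ℝ) (x : ℝ) : ℝ := (volume (A ∩ Set.Ico 0 x)).toReal

/-- The thinning operation `A ∘ B = {x : x ∈ A ∧ S_A(x) ∈ B}`. -/
def thin (A B : Set ℝ) : Set ℝ := {x | x ∈ A ∧ Sfn A x ∈ B}

/-- An f-system on `[0,∞)`: a nonempty collection of subsets of `[0,∞)` closed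
under complements (in `[0,∞)`) and finite disjoint unions. -/
structure IsFSystem (F : Set (Set ℝ)) : Prop where
  nonempty : F.Nonempty
  subset_ray : ∀ A ∈ F, A ⊆ Ray
  compl_mem : ∀ A ∈ F, Ray \ A ∈ F
  union_mem : ∀ A ∈ F, ∀ B ∈ F, A ∩ B = ∅ → A ∪ B ∈ F

/-- A probability pair `(F, μ)` on `[0,∞)`: `F` is an f-system and `μ` is a finitely
additive probability measure on `F` with values in `[0,1]` and `μ([0,∞)) = 1`. -/
structure IsProbPair (F : Set (Set ℝ)) (μ : Set ℝ → ℝ) : Prop where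
  fsystem : IsFSystem F
  nonneg : ∀ A ∈ F, 0 ≤ μ A
  le_one : ∀ A ∈ F, μ A ≤ 1
  ray_eq_one : μ Ray = 1
  additive : ∀ A ∈ F, ∀ B ∈ F, A ∩ B = ∅ → μ (A ∪ B) = μ A + μ B

/-- A weakly thinnable pair (WTP). -/
structure IsWTP (F : Set (Set ℝ)) (μ : Set ℝ → ℝ) : Prop where
  pair : IsProbPair F μ
  Ccal_subset : Ccal ⊆ F
  subset_Mcal : F ⊆ Mcal
  P1 : ∀ C ∈ Ccal, ∀ A ∈ F, thin C A ∈ F ∧ μ (thin C A) = μ C * μ A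
  P2 : ∀ A ∈ F, ∀ B ∈ F, (∀ x : ℝ, Sfn B x ≤ Sfn A x) → μ B ≤ μ A
  P3 : ∀ c : ℝ, 0 ≤ c → μ (Set.Ici c) = 1

/-- Coherence of a probability measure `μ` on an f-system `F` on `[0,∞)`. -/
def Coherent (F : Set (Set ℝ)) (μ : Set ℝ → ℝ) : Prop :=
  ∀ (n : ℕ) (a : Fin n → ℝ) (A : Fin n → Set ℝ), (∀ i, A i ∈ F) →
    0 ≤ ⨆ x : Ray, ∑ i, a i * (ind (A i) ↑x - μ (A i))

/-- `σ_A(D,x) = (1/D) ∫_x^{x+D} 1_A(y) dy`. -/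
def sigmaFn (A : Set ℝ) (D x : ℝ) : ℝ := (1 / D) * ∫ y in x..(x + D), ind A y

/-- `U(A) = limsup_{D→∞} sup_{x>0} σ_A(D,x)`. -/
def Ufn (A : Set ℝ) : ℝ :=
  limsup (fun D => ⨆ x : Set.Ioi (0:ℝ), sigmaFn A D ↑x) atTop

/-- `L(A) = liminf_{D→∞} inf_{x>0} σ_A(D,x)`. -/
def Lfn (A : Set ℝ) : ℝ :=
  liminf (fun D => ⨅ x : Set.Ioi (0:ℝ), sigmaFn A D ↑x) atTop

/-- `𝓦^uni = {A ∈ 𝓜 : L(A) = U(A)}`. -/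
def Wuni : Set (Set ℝ) := {A | A ∈ Mcal ∧ Lfn A = Ufn A}

/-- `log(A) = {log a : a ∈ A ∩ [1,∞)}`. -/
def logSet (A : Set ℝ) : Set ℝ := Real.log '' (A ∩ Set.Ici 1)

/-- `𝓐^uni = {A ∈ 𝓜 : log(A) ∈ 𝓦^uni}`. -/
def Auni : Set (Set ℝ) := {A | A ∈ Mcal ∧ logSet A ∈ Wuni}

/-- `α(A) = λ(log(A))`. -/
def alphaFn (A : Set ℝ) : ℝ := lam (logSet A)

/-- `ξ_A(D,x) = (1/log D) ∫_x^{Dx} ρ_A(y)/y dy`. -/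
def xi (A : Set ℝ) (D x : ℝ) : ℝ :=
  (1 / Real.log D) * ∫ y in x..(D * x), rho A y / y

/-- Membership in `𝓟`: `s` is a sequence in `(1,∞)` tending to `∞` and `f` is a
sequence in `(1,∞)`. -/
def memP (s f : ℕ → ℝ) : Prop :=
  (∀ n, 1 < s n) ∧ Tendsto s atTop atTop ∧ ∀ n, 1 < f n

/-- `𝓐^{s,f} = {A ∈ 𝓜 : lim_n ξ_A(s_n,f_n) exists}`. -/
def Asf (s f : ℕ → ℝ) : Set (Set ℝ) :=
  {A | A ∈ Mcal ∧ ∃ l : ℝ, Tendsto (fun n => xi A (s n) (f n)) atTop (𝓝 l)}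

/-- `α^{s,f}(A) = lim_n ξ_A(s_n,f_n)`. -/
def alphasf (s f : ℕ → ℝ) (A : Set ℝ) : ℝ :=
  limUnder atTop fun n => xi A (s n) (f n)

/-- `τ_A(C,j)`; here `j : ℕ` starting from `0` corresponds to the interval
`[C^j, C^{j+1})`, i.e. to the paper's `τ_A(C, j+1)`. -/
def tau (A : Set ℝ) (C : ℝ) (j : ℕ) : ℝ :=
  (1 / (C ^ j * (C - 1))) * ∫ y in (C ^ j : ℝ)..(C ^ (j + 1)), ind A y

/-- `U^*(C,A) = limsup_{n→∞} sup_k (1/n) Σ_{j=k}^{k+n-1} τ_A(C,j)`. -/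
def Ustar (C : ℝ) (A : Set ℝ) : ℝ :=
  limsup (fun n : ℕ => ⨆ k : ℕ, (1 / (n : ℝ)) * ∑ i ∈ Finset.range n, tau A C (k + i)) atTop

lemma ind_nonneg (S : Set ℝ) (y : ℝ) : 0 ≤ ind S y :=
  Set.indicator_nonneg (fun _ _ => zero_le_one) y

lemma ind_le_one (S : Set ℝ) (y : ℝ) : ind S y ≤ 1 :=
  Set.indicator_le' (fun _ _ => le_rfl) (fun _ _ => zero_le_one) y

lemma intervalIntegrable_ind {S : Set ℝ} (hS : MeasurableSet S) (a b : ℝ) :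
    IntervalIntegrable (ind S) volume a b :=
  (intervalIntegrable_const (c := (1 : ℝ))).mono_fun
    (measurable_const.indicator hS).aestronglyMeasurable
    (ae_of_all _ fun y => by simpa [abs_of_nonneg (ind_nonneg S y)] using ind_le_one S y)

lemma measurableSet_of_mem_Mcal {A : Set ℝ} (hA : A ∈ Mcal) : MeasurableSet A := by
  obtain ⟨a, -, -, rfl⟩ := hA
  exact MeasurableSet.iUnion fun i => measurableSet_Ico

lemma logSet_eq (A : Set ℝ) : logSet A = Set.Ici 0 ∩ Real.exp ⁻¹' A := by
  ext t
  constructor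
  · rintro ⟨a, ⟨haA, ha1⟩, rfl⟩
    refine ⟨Real.log_nonneg ha1, ?_⟩
    rwa [Set.mem_preimage, Real.exp_log (one_pos.trans_le ha1)]
  · rintro ⟨ht0, hta⟩
    exact ⟨Real.exp t, ⟨hta, Real.one_le_exp ht0⟩, Real.log_exp t⟩

lemma measurableSet_logSet {A : Set ℝ} (hA : MeasurableSet A) : MeasurableSet (logSet A) := by
  rw [logSet_eq]
  exact measurableSet_Ici.inter (hA.preimage Real.measurable_exp)

lemma ind_logSet (A : Set ℝ) {t : ℝ} (ht : 0 ≤ t) : ind (logSet A) t = ind A (Real.exp t) := by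
  have hmem : t ∈ logSet A ↔ Real.exp t ∈ A := by simp [logSet_eq, ht]
  unfold ind
  by_cases h : t ∈ logSet A
  · rw [Set.indicator_of_mem h, Set.indicator_of_mem (hmem.1 h)]
  · rw [Set.indicator_of_notMem h, Set.indicator_of_notMem (mt hmem.2 h)]

lemma mul_sigmaFn (B : Set ℝ) {D : ℝ} (hD : D ≠ 0) (x : ℝ) :
    D * sigmaFn B D x = ∫ y in x..x + D, ind B y := by
  rw [sigmaFn, ← mul_assoc, mul_one_div_cancel hD, one_mul]

lemma sigmaFn_nonneg (B : Set ℝ) {D : ℝ} (hD : 0 ≤ D) (x : ℝ) : 0 ≤ sigmaFn B D x :=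
  mul_nonneg (by positivity)
    (intervalIntegral.integral_nonneg (by linarith) fun y _ => ind_nonneg B y)

lemma sigmaFn_le_one {B : Set ℝ} (hB : MeasurableSet B) {D : ℝ} (hD : 0 ≤ D) (x : ℝ) :
    sigmaFn B D x ≤ 1 := by
  rcases hD.eq_or_lt with rfl | hD
  · simp [sigmaFn]
  have hint : ∫ y in x..x + D, ind B y ≤ ∫ _ in x..x + D, (1 : ℝ) :=
    intervalIntegral.integral_mono_on (by linarith) (intervalIntegrable_ind hB _ _)
      intervalIntegrable_const fun y _ => ind_le_one B y
  rw [← mul_le_mul_iff_of_pos_left hD, mul_sigmaFn B hD.ne', mul_one]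
  simpa using hint

lemma continuous_sigmaFn {B : Set ℝ} (hB : MeasurableSet B) (D : ℝ) :
    Continuous (sigmaFn B D) := by
  have hprim := intervalIntegral.continuous_primitive (intervalIntegrable_ind hB) 0
  have hsub : ∀ x, ∫ y in x..x + D, ind B y =
      (∫ y in (0 : ℝ)..x + D, ind B y) - ∫ y in (0 : ℝ)..x, ind B y := fun x =>
    (intervalIntegral.integral_interval_sub_left (intervalIntegrable_ind hB _ _)
      (intervalIntegrable_ind hB _ _)).symm
  show Continuous fun x => (1 / D) * ∫ y in x..x + D, ind B y
  simp only [hsub]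
  fun_prop

lemma integral_mul_exp_bounds {g : ℝ → ℝ} {a b : ℝ} (hab : a ≤ b)
    (hg : IntervalIntegrable g volume a b) (hg0 : ∀ t, 0 ≤ g t) (hg1 : ∀ t, g t ≤ 1) :
    Real.exp a * ∫ t in a..b, g t ≤ ∫ t in a..b, g t * Real.exp t ∧
    ∫ t in a..b, g t * Real.exp t ≤
      Real.exp b - Real.exp a - Real.exp a * (b - a - ∫ t in a..b, g t) := by
  have hge : IntervalIntegrable (fun t => g t * Real.exp t) volume a b :=
    hg.mul_continuousOn Real.continuous_exp.continuousOn
  constructor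
  · rw [← intervalIntegral.integral_const_mul]
    refine intervalIntegral.integral_mono_on hab (hg.const_mul _) hge fun t ht => ?_
    rw [mul_comm]
    exact mul_le_mul_of_nonneg_left (Real.exp_le_exp.2 ht.1) (hg0 t)
  · -- `(1 - g t) * (exp t - exp a) ≥ 0` on `[a, b]`
    have hle : ∫ t in a..b, g t * Real.exp t ≤
        ∫ t in a..b, (Real.exp t - Real.exp a * (1 - g t)) := by
      refine intervalIntegral.integral_mono_on hab hge
        (Real.continuous_exp.intervalIntegrable a b |>.sub
          ((intervalIntegrable_const.sub hg).const_mul _)) fun t ht => ?_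
      nlinarith [Real.exp_le_exp.2 ht.1, hg1 t]
    rw [intervalIntegral.integral_sub (Real.continuous_exp.intervalIntegrable a b)
      ((intervalIntegrable_const.sub hg).const_mul _), integral_exp,
      intervalIntegral.integral_const_mul,
      intervalIntegral.integral_sub intervalIntegrable_const hg, intervalIntegral.integral_const,
      smul_eq_mul, mul_one] at hle
    exact hle

lemma integral_ind_exp (A : Set ℝ) {a b : ℝ} (ha : 0 ≤ a) (hab : a ≤ b) :
    ∫ y in Real.exp a..Real.exp b, ind A y = ∫ t in a..b, ind (logSet A) t * Real.exp t := by
  rw [← intervalIntegral.integral_comp_mul_deriv_of_deriv_nonneg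
    Real.continuous_exp.continuousOn (fun t _ => Real.hasDerivAt_exp t)
    (fun t _ => (Real.exp_pos t).le)]
  refine intervalIntegral.integral_congr fun t ht => ?_
  rw [Set.uIcc_of_le hab] at ht
  simp only [Function.comp_apply, ind_logSet A (ha.trans ht.1)]

lemma tau_bounds {A : Set ℝ} (hA : MeasurableSet A) {C : ℝ} (hC : 1 < C) (j : ℕ) :
    Real.log C / (C - 1) * sigmaFn (logSet A) (Real.log C) (j * Real.log C) ≤ tau A C j ∧
    tau A C j ≤ 1 - Real.log C / (C - 1) +
      Real.log C / (C - 1) * sigmaFn (logSet A) (Real.log C) (j * Real.log C) := by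
  set L := Real.log C
  have hL : 0 < L := Real.log_pos hC
  have hC1 : 0 < C - 1 := by linarith
  set a := (j : ℝ) * L
  have ha : 0 ≤ a := by positivity
  have hexp_a : Real.exp a = C ^ j := by rw [Real.exp_nat_mul, Real.exp_log (by linarith)]
  have hexp_b : Real.exp (a + L) = C ^ (j + 1) := by
    rw [Real.exp_add, hexp_a, Real.exp_log (by linarith), pow_succ]
  have hchange : ∫ y in (C ^ j : ℝ)..C ^ (j + 1), ind A y =
      ∫ t in a..a + L, ind (logSet A) t * Real.exp t := by
    rw [← hexp_a, ← hexp_b, integral_ind_exp A ha (by linarith)]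
  obtain ⟨hlow, hupp⟩ := integral_mul_exp_bounds (by linarith : a ≤ a + L)
    (intervalIntegrable_ind (measurableSet_logSet hA) _ _) (ind_nonneg _) (ind_le_one _)
  rw [← mul_sigmaFn _ hL.ne', ← hchange, hexp_a] at hlow
  rw [← mul_sigmaFn _ hL.ne', ← hchange, hexp_a, hexp_b, pow_succ] at hupp
  have hP : 0 < (C : ℝ) ^ j := pow_pos (by linarith) j
  set σ := sigmaFn (logSet A) L a
  rw [tau, one_div_mul_eq_div]
  constructor
  · rw [le_div_iff₀ (by positivity)]
    calc L / (C - 1) * σ * (C ^ j * (C - 1)) = C ^ j * (L * σ) := by field_simp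
      _ ≤ _ := hlow
  · rw [div_le_iff₀ (by positivity), pow_succ]
    calc _ ≤ C ^ j * C - C ^ j - C ^ j * (a + L - a - L * σ) := hupp
      _ = (1 - L / (C - 1) + L / (C - 1) * σ) * (C ^ j * (C - 1)) := by field_simp; ring

lemma sum_sigmaFn_grid {B : Set ℝ} (hB : MeasurableSet B) (L : ℝ) (n k : ℕ) :
    ∑ i ∈ Finset.range n, sigmaFn B L ((k + i : ℕ) * L) = n * sigmaFn B (n * L) (k * L) := by
  rcases eq_or_ne n 0 with rfl | hn
  · simp
  rcases eq_or_ne L 0 with rfl | hL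
  · simp [sigmaFn]
  have hadj : ∑ i ∈ Finset.range n, ∫ y in ((k + i : ℕ) : ℝ) * L..((k + i : ℕ) : ℝ) * L + L,
      ind B y = ∫ y in (k : ℝ) * L..k * L + n * L, ind B y := by
    convert intervalIntegral.sum_integral_adjacent_intervals (μ := volume)
      (a := fun i : ℕ => ((k + i : ℕ) : ℝ) * L) (n := n)
      (fun i _ => intervalIntegrable_ind hB _ _) using 3 <;> push_cast <;> ring
  calc ∑ i ∈ Finset.range n, sigmaFn B L ((k + i : ℕ) * L)
      = 1 / L * ∫ y in (k : ℝ) * L..k * L + n * L, ind B y := by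
        simp only [sigmaFn, ← Finset.mul_sum, hadj]
    _ = n * sigmaFn B (n * L) (k * L) := by
        rw [sigmaFn]
        field_simp

lemma tau_avg_bounds {A : Set ℝ} (hA : MeasurableSet A) {C : ℝ} (hC : 1 < C) {n : ℕ}
    (hn : n ≠ 0) (k : ℕ) :
    Real.log C / (C - 1) * sigmaFn (logSet A) (n * Real.log C) (k * Real.log C) ≤
      1 / (n : ℝ) * ∑ i ∈ Finset.range n, tau A C (k + i) ∧
    1 / (n : ℝ) * ∑ i ∈ Finset.range n, tau A C (k + i) ≤ 1 - Real.log C / (C - 1) +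
      Real.log C / (C - 1) * sigmaFn (logSet A) (n * Real.log C) (k * Real.log C) := by
  set L := Real.log C
  set r := L / (C - 1)
  have hn0 : (0 : ℝ) < n := by positivity
  have hgrid := sum_sigmaFn_grid (measurableSet_logSet hA) L n k
  have hlow : ∑ i ∈ Finset.range n, r * sigmaFn (logSet A) L ((k + i : ℕ) * L) ≤
      ∑ i ∈ Finset.range n, tau A C (k + i) :=
    Finset.sum_le_sum fun i _ => (tau_bounds hA hC (k + i)).1
  have hupp : ∑ i ∈ Finset.range n, tau A C (k + i) ≤
      ∑ i ∈ Finset.range n, (1 - r + r * sigmaFn (logSet A) L ((k + i : ℕ) * L)) :=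
    Finset.sum_le_sum fun i _ => (tau_bounds hA hC (k + i)).2
  rw [← Finset.mul_sum, hgrid] at hlow
  rw [Finset.sum_add_distrib, ← Finset.mul_sum, hgrid, Finset.sum_const, Finset.card_range,
    nsmul_eq_mul] at hupp
  rw [one_div_mul_eq_div, le_div_iff₀ hn0, div_le_iff₀ hn0]
  constructor <;> linarith

def sigmaSup (B : Set ℝ) (D : ℝ) : ℝ := ⨆ x : Set.Ioi (0 : ℝ), sigmaFn B D x

def sigmaGridSup (B : Set ℝ) (L : ℝ) (n : ℕ) : ℝ := ⨆ k : ℕ, sigmaFn B (n * L) (k * L)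

def tauAvgSup (A : Set ℝ) (C : ℝ) (n : ℕ) : ℝ :=
  ⨆ k : ℕ, 1 / (n : ℝ) * ∑ i ∈ Finset.range n, tau A C (k + i)

lemma Ufn_eq_limsup_sigmaSup (B : Set ℝ) : Ufn B = limsup (sigmaSup B) atTop := rfl

lemma Ustar_eq_limsup_tauAvgSup (C : ℝ) (A : Set ℝ) :
    Ustar C A = limsup (tauAvgSup A C) atTop := rfl

lemma bddAbove_range_sigmaFn {B : Set ℝ} (hB : MeasurableSet B) {D : ℝ} (hD : 0 ≤ D)
    {ι : Type*} (x : ι → ℝ) : BddAbove (Set.range fun i => sigmaFn B D (x i)) :=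
  ⟨1, by rintro _ ⟨i, rfl⟩; exact sigmaFn_le_one hB hD _⟩

lemma sigmaFn_le_sigmaSup {B : Set ℝ} (hB : MeasurableSet B) {D x : ℝ} (hD : 0 ≤ D)
    (hx : 0 ≤ x) : sigmaFn B D x ≤ sigmaSup B D := by
  -- `x = 0` is not a point of the supremum; reach it by continuity from the right
  refine le_of_tendsto ((continuous_sigmaFn hB D).continuousWithinAt (s := Set.Ioi x)) ?_
  filter_upwards [self_mem_nhdsWithin] with y hy
  exact le_ciSup (bddAbove_range_sigmaFn hB hD Subtype.val) (⟨y, hx.trans_lt hy⟩ : Set.Ioi (0 : ℝ))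

lemma sigmaSup_nonneg {B : Set ℝ} (hB : MeasurableSet B) {D : ℝ} (hD : 0 ≤ D) :
    0 ≤ sigmaSup B D :=
  (sigmaFn_nonneg B hD 0).trans (sigmaFn_le_sigmaSup hB hD le_rfl)

lemma sigmaSup_le_one {B : Set ℝ} (hB : MeasurableSet B) {D : ℝ} (hD : 0 ≤ D) :
    sigmaSup B D ≤ 1 :=
  ciSup_le fun x => sigmaFn_le_one hB hD x

lemma sigmaGridSup_nonneg (B : Set ℝ) {L : ℝ} (hL : 0 ≤ L) (n : ℕ) : 0 ≤ sigmaGridSup B L n :=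
  Real.iSup_nonneg fun k => sigmaFn_nonneg B (by positivity) _

lemma sigmaGridSup_le_one {B : Set ℝ} (hB : MeasurableSet B) {L : ℝ} (hL : 0 ≤ L) (n : ℕ) :
    sigmaGridSup B L n ≤ 1 :=
  ciSup_le fun k => sigmaFn_le_one hB (by positivity) _

lemma sigmaGridSup_le_sigmaSup {B : Set ℝ} (hB : MeasurableSet B) {L : ℝ} (hL : 0 ≤ L) (n : ℕ) :
    sigmaGridSup B L n ≤ sigmaSup B (n * L) :=
  ciSup_le fun k => sigmaFn_le_sigmaSup hB (by positivity) (by positivity)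

lemma sigmaSup_le_sigmaGridSup_add {B : Set ℝ} (hB : MeasurableSet B) {L D : ℝ} (hL : 0 < L)
    (hD : 0 < D) : sigmaSup B D ≤ sigmaGridSup B L (⌈D / L⌉₊ + 1) + 2 * L / D := by
  set n := ⌈D / L⌉₊ + 1
  have hn : D + L ≤ n * L ∧ n * L < D + 2 * L := by
    have h1 := (div_le_iff₀ hL).1 (Nat.le_ceil (D / L))
    have h2 := mul_lt_mul_of_pos_right (Nat.ceil_lt_add_one (div_nonneg hD.le hL.le)) hL
    rw [add_mul, div_mul_cancel₀ _ hL.ne'] at h2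
    simp only [n]
    push_cast
    constructor <;> nlinarith
  refine ciSup_le fun ⟨x, hx⟩ => ?_
  set k := ⌊x / L⌋₊
  have hk : k * L ≤ x ∧ x < k * L + L := by
    have h1 := (le_div_iff₀ hL).1 (Nat.floor_le (div_nonneg (le_of_lt hx) hL.le))
    have h2 := (div_lt_iff₀ hL).1 (Nat.lt_floor_add_one (x / L))
    constructor <;> nlinarith
  have hwin : ∫ y in x..x + D, ind B y ≤ ∫ y in k * L..k * L + n * L, ind B y :=
    intervalIntegral.integral_mono_interval hk.1 (by linarith) (by linarith)
      (ae_of_all _ (ind_nonneg B)) (intervalIntegrable_ind hB _ _)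
  have hnL : 0 < (n : ℝ) * L := by linarith
  have hσ0 := sigmaFn_nonneg B hnL.le (k * L)
  have hσ1 := sigmaFn_le_one hB hnL.le (k * L)
  have hV : sigmaFn B (n * L) (k * L) ≤ sigmaGridSup B L n :=
    le_ciSup (bddAbove_range_sigmaFn hB hnL.le fun k : ℕ => (k : ℝ) * L) k
  rw [← mul_le_mul_iff_of_pos_left hD, mul_sigmaFn B hD.ne', mul_add, mul_div_cancel₀ _ hD.ne']
  rw [← mul_sigmaFn B hnL.ne'] at hwin
  nlinarith

lemma limsup_sigmaGridSup {B : Set ℝ} (hB : MeasurableSet B) {L : ℝ} (hL : 0 < L) :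
    limsup (sigmaGridSup B L) atTop = Ufn B := by
  have hV_bdd : IsBoundedUnder (· ≤ ·) atTop (sigmaGridSup B L) :=
    isBoundedUnder_of ⟨1, sigmaGridSup_le_one hB hL.le⟩
  have hV_cobdd : IsCoboundedUnder (· ≤ ·) atTop (sigmaGridSup B L) :=
    isCoboundedUnder_le_of_le atTop (sigmaGridSup_nonneg B hL.le)
  have hS_bdd : IsBoundedUnder (· ≤ ·) atTop (sigmaSup B) :=
    isBoundedUnder_of_eventually_le (a := 1) <| by
      filter_upwards [eventually_ge_atTop 0] with D hD using sigmaSup_le_one hB hD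
  have hS_cobdd : IsCoboundedUnder (· ≤ ·) atTop (sigmaSup B) :=
    IsBoundedUnder.isCoboundedUnder_le <| isBoundedUnder_of_eventually_ge (a := 0) <| by
      filter_upwards [eventually_ge_atTop 0] with D hD using sigmaSup_nonneg hB hD
  rw [Ufn_eq_limsup_sigmaSup]
  apply le_antisymm
  · refine le_of_forall_gt_imp_ge_of_dense fun c hc => limsup_le_of_le hV_cobdd ?_
    have hnL : Tendsto (fun n : ℕ => (n : ℝ) * L) atTop atTop :=
      tendsto_natCast_atTop_atTop.atTop_mul_const hL
    filter_upwards [hnL.eventually (eventually_lt_of_limsup_lt hc hS_bdd)] with n hn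
    exact (sigmaGridSup_le_sigmaSup hB hL.le n).trans hn.le
  · refine le_of_forall_gt_imp_ge_of_dense fun c hc => limsup_le_of_le hS_cobdd ?_
    obtain ⟨c', hc', hc'c⟩ := exists_between hc
    have hcover : Tendsto (fun D : ℝ => ⌈D / L⌉₊ + 1) atTop atTop :=
      (tendsto_add_atTop_nat 1).comp (tendsto_nat_ceil_atTop.comp (tendsto_id.atTop_div_const hL))
    filter_upwards [hcover.eventually (eventually_lt_of_limsup_lt hc' hV_bdd),
      eventually_ge_atTop (2 * L / (c - c')), eventually_gt_atTop 0] with D hV hD hD0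
    have hεD : 2 * L / D ≤ c - c' := by
      rw [div_le_iff₀ hD0]
      rw [div_le_iff₀ (sub_pos.2 hc'c)] at hD
      linarith
    linarith [sigmaSup_le_sigmaGridSup_add hB hL hD0 (B := B)]

lemma tauAvgSup_bounds {A : Set ℝ} (hA : MeasurableSet A) {C : ℝ} (hC : 1 < C) {n : ℕ}
    (hn : n ≠ 0) :
    Real.log C / (C - 1) * sigmaGridSup (logSet A) (Real.log C) n ≤ tauAvgSup A C n ∧
    tauAvgSup A C n ≤ 1 - Real.log C / (C - 1) +
      Real.log C / (C - 1) * sigmaGridSup (logSet A) (Real.log C) n := by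
  set L := Real.log C
  set r := L / (C - 1)
  have hL : 0 < L := Real.log_pos hC
  have hr : 0 ≤ r := div_nonneg hL.le (by linarith)
  have hupp : ∀ k : ℕ, 1 / (n : ℝ) * ∑ i ∈ Finset.range n, tau A C (k + i) ≤
      1 - r + r * sigmaGridSup (logSet A) L n := fun k =>
    (tau_avg_bounds hA hC hn k).2.trans <| by
      gcongr
      exact le_ciSup (bddAbove_range_sigmaFn (measurableSet_logSet hA) (by positivity)
        fun k : ℕ => (k : ℝ) * L) k
  refine ⟨?_, ciSup_le hupp⟩
  rw [sigmaGridSup, Real.mul_iSup_of_nonneg hr]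
  exact ciSup_mono ⟨_, by rintro _ ⟨k, rfl⟩; exact hupp k⟩ fun k => (tau_avg_bounds hA hC hn k).1

lemma limsup_const_add_mul {ι : Type*} {F : Filter ι} [F.NeBot] {u : ι → ℝ} (a : ℝ) {b : ℝ}
    (hb : 0 ≤ b) (hbdd : IsBoundedUnder (· ≤ ·) F u) (hcobdd : IsCoboundedUnder (· ≤ ·) F u) :
    limsup (fun i => a + b * u i) F = a + b * limsup u F :=
  (Monotone.map_limsup_of_continuousAt (f := fun x => a + b * x)
    (fun _ _ h => by dsimp only; gcongr) u
    (continuous_const.add (continuous_const.mul continuous_id)).continuousAt hbdd hcobdd).symm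

lemma Ustar_bounds {A : Set ℝ} (hA : MeasurableSet A) {C : ℝ} (hC : 1 < C) :
    Real.log C / (C - 1) * Ufn (logSet A) ≤ Ustar C A ∧
    Ustar C A ≤ 1 - Real.log C / (C - 1) + Real.log C / (C - 1) * Ufn (logSet A) := by
  set L := Real.log C
  set r := L / (C - 1)
  have hL : 0 < L := Real.log_pos hC
  have hr : 0 ≤ r := div_nonneg hL.le (by linarith)
  set V := sigmaGridSup (logSet A) L
  set W := tauAvgSup A C
  have hV0 : ∀ n, 0 ≤ V n := sigmaGridSup_nonneg _ hL.le
  have hV1 : ∀ n, V n ≤ 1 := sigmaGridSup_le_one (measurableSet_logSet hA) hL.le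
  have haffine : ∀ a, limsup (fun n => a + r * V n) atTop = a + r * limsup V atTop := fun a =>
    limsup_const_add_mul a hr (isBoundedUnder_of ⟨1, hV1⟩) (isCoboundedUnder_le_of_le atTop hV0)
  have hW : ∀ᶠ n in atTop, r * V n ≤ W n ∧ W n ≤ 1 - r + r * V n :=
    (eventually_ne_atTop 0).mono fun n hn => tauAvgSup_bounds hA hC hn
  have hW_bdd : IsBoundedUnder (· ≤ ·) atTop W :=
    isBoundedUnder_of_eventually_le (a := 1) <| hW.mono fun n h => by nlinarith [hV1 n]
  have hW_cobdd : IsCoboundedUnder (· ≤ ·) atTop W :=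
    IsBoundedUnder.isCoboundedUnder_le <| isBoundedUnder_of_eventually_ge (a := 0) <|
      hW.mono fun n h => (mul_nonneg hr (hV0 n)).trans h.1
  rw [← limsup_sigmaGridSup (measurableSet_logSet hA) hL, Ustar_eq_limsup_tauAvgSup]
  constructor
  · calc r * limsup V atTop = limsup (fun n => 0 + r * V n) atTop := by rw [haffine, zero_add]
      _ ≤ limsup W atTop :=
        limsup_le_limsup (hW.mono fun n h => by simpa using h.1)
          (isCoboundedUnder_le_of_le atTop (x := 0) fun n => by nlinarith [hV0 n]) hW_bdd
  · calc limsup W atTop ≤ limsup (fun n => (1 - r) + r * V n) atTop :=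
          limsup_le_limsup (hW.mono fun n h => h.2) hW_cobdd
            (isBoundedUnder_of ⟨1 - r + r, fun n => by nlinarith [hV1 n]⟩)
      _ = 1 - r + r * limsup V atTop := haffine _

lemma tendsto_log_div_sub_one : Tendsto (fun C => Real.log C / (C - 1)) (𝓝[>] 1) (𝓝 1) := by
  have h := ((Real.hasDerivAt_log one_ne_zero).tendsto_slope.mono_left (nhdsGT_le_nhdsNE 1))
  rw [inv_one] at h
  refine h.congr fun C => ?_
  rw [slope_def_field, Real.log_one, sub_zero]

/-- For every `A ∈ 𝓜`, `lim_{C↓1} U^*(C,A) = U(log(A))`, together with the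
two-sided bound `(log C/(C−1))·U(log A) ≤ U^*(C,A) ≤ 1 − (log C/(C−1))·(1 − U(log A))`
for every `C > 1`. -/
theorem stmt13 (A : Set ℝ) (hA : A ∈ Mcal) :
    Tendsto (fun C => Ustar C A) (𝓝[>] (1:ℝ)) (𝓝 (Ufn (logSet A))) ∧
    ∀ C : ℝ, 1 < C →
      (Real.log C / (C - 1)) * Ufn (logSet A) ≤ Ustar C A ∧
      Ustar C A ≤ 1 - (Real.log C / (C - 1)) * (1 - Ufn (logSet A)) := by
  have hbounds : ∀ C : ℝ, 1 < C →
      (Real.log C / (C - 1)) * Ufn (logSet A) ≤ Ustar C A ∧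
      Ustar C A ≤ 1 - (Real.log C / (C - 1)) * (1 - Ufn (logSet A)) := fun C hC => by
    obtain ⟨hlow, hupp⟩ := Ustar_bounds (measurableSet_of_mem_Mcal hA) hC
    exact ⟨hlow, by linarith⟩
  refine ⟨?_, hbounds⟩
  have hlow := tendsto_log_div_sub_one.mul_const (Ufn (logSet A))
  have hupp := (tendsto_log_div_sub_one.mul_const (1 - Ufn (logSet A))).const_sub 1
  rw [one_mul] at hlow
  rw [one_mul, sub_sub_cancel] at hupp
  exact tendsto_of_tendsto_of_tendsto_of_le_of_le' hlow hupp
    (eventually_nhdsWithin_of_forall fun C hC => (hbounds C hC).1)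
    (eventually_nhdsWithin_of_forall fun C hC => (hbounds C hC).2)

end UPN
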